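/- In C[Gamma(n)] with n ≥ 1, theta_n(Delta_n^{M}) = Delta_{n-1}^{M} for every partition M with |M| ≤ n, with the convention Delta_{n-1}^{M} = 0 if |M| > n-1, where theta_n is the linear map induced by taking the upper-left (n-1)×(n-1) corner of matrices (equivalently, a ↦ a * eps_n restricted appropriately). -/

import Mathlib

open scoped BigOperators

/-- A partial bijection of `α`: a partially defined injective map,
encoded as an `Option`-valued function that is injective on its domain. -/
def PartialBij (α : Type*) : Type _ :=
  {f : α → Option α // ∀ x y z : α, f x = some z → f y = some z → x = y}

namespace PartialBij

variable {α : Type*}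

/-- Composition: `(g.comp f) x = g (f x)` (product of relations). -/
def comp (g f : PartialBij α) : PartialBij α :=
  ⟨fun x => (f.1 x).bind g.1, by
    intro x y z hx hy
    rcases Option.bind_eq_some_iff.mp hx with ⟨a, ha, ha'⟩
    rcases Option.bind_eq_some_iff.mp hy with ⟨b, hb, hb'⟩
    have hab : a = b := g.2 _ _ _ ha' hb'
    subst hab
    exact f.2 _ _ _ ha hb⟩

instance : Monoid (PartialBij α) where
  mul := comp
  one := ⟨fun x => some x, fun x y z hx hy =>
    (Option.some_inj.mp hx).trans (Option.some_inj.mp hy).symm⟩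
  mul_assoc a b c := Subtype.ext <| funext fun x => (Option.bind_assoc _ _ _).symm
  one_mul a := Subtype.ext <| funext fun x => by
    show (a.1 x).bind some = a.1 x
    cases a.1 x <;> rfl
  mul_one a := Subtype.ext <| funext fun x => rfl

theorem mul_def (g f : PartialBij α) (x : α) : (g * f).1 x = (f.1 x).bind g.1 := rfl

theorem one_def (x : α) : (1 : PartialBij α).1 x = some x := rfl

/-- The domain of a partial bijection. -/
def dom (f : PartialBij α) : Set α := {x | f.1 x ≠ none}

/-- The range of a partial bijection. -/
def ran (f : PartialBij α) : Set α := {y | ∃ x, f.1 x = some y}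

open Classical in
/-- The inverse partial bijection `γ*`. -/
noncomputable def inv (f : PartialBij α) : PartialBij α :=
  ⟨fun y => if h : ∃ x, f.1 x = some y then some h.choose else none, by
    intro a b z ha hb
    dsimp only at ha hb
    by_cases h1 : ∃ x, f.1 x = some a
    · by_cases h2 : ∃ x, f.1 x = some b
      · rw [dif_pos h1] at ha
        rw [dif_pos h2] at hb
        have ha' := h1.choose_spec
        have hb' := h2.choose_spec
        rw [Option.some_inj.mp ha] at ha'
        rw [Option.some_inj.mp hb] at hb'
        exact Option.some_inj.mp (ha'.symm.trans hb')
      · rw [dif_neg h2] at hb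
        exact absurd hb (by simp)
    · rw [dif_neg h1] at ha
      exact absurd ha (by simp)⟩

open Classical in
/-- The identity bijection `1_Y` of a subset `Y ⊆ α`. -/
noncomputable def idOn (Y : Set α) : PartialBij α :=
  ⟨fun x => if x ∈ Y then some x else none, by
    intro x y z hx hy
    dsimp only at hx hy
    split_ifs at hx hy
    exact (Option.some_inj.mp hx).trans (Option.some_inj.mp hy).symm⟩

/-- A permutation regarded as a (total) partial bijection. -/
def ofPerm (s : Equiv.Perm α) : PartialBij α :=
  ⟨fun x => some (s x), fun x y z hx hy =>
    s.injective ((Option.some_inj.mp hx).trans (Option.some_inj.mp hy).symm)⟩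

/-- The idempotent `ε_k`: the identity bijection of `α \ {k}`. -/
def eps [DecidableEq α] (k : α) : PartialBij α :=
  ⟨fun x => if x = k then none else some x, by
    intro x y z hx hy
    dsimp only at hx hy
    split_ifs at hx hy
    exact (Option.some_inj.mp hx).trans (Option.some_inj.mp hy).symm⟩

/-- `deg γ`: the number of points which are not fixed points of `γ`. -/
def deg {n : ℕ} (f : PartialBij (Fin n)) : ℕ :=
  (Finset.univ.filter fun i : Fin n => f.1 i ≠ some i).card

/-- `deg_m γ`: the number of points in `{m+1,…,n}` (0-indexed: indices `≥ m`)
which are not fixed points of `γ`. -/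
def degm {n : ℕ} (m : ℕ) (f : PartialBij (Fin n)) : ℕ :=
  (Finset.univ.filter fun i : Fin n => m ≤ i.val ∧ f.1 i ≠ some i).card

/-- The rank of a partial bijection: the cardinality of its domain. -/
def rank {n : ℕ} (f : PartialBij (Fin n)) : ℕ :=
  (Finset.univ.filter fun i : Fin n => f.1 i ≠ none).card

end PartialBij

namespace PartialBij

/-- The upper-left `n × n` corner of a partial bijection of `{1,…,n+1}`. -/
def corner {n : ℕ} (γ : PartialBij (Fin (n + 1))) : PartialBij (Fin n) :=
  ⟨fun i => (γ.1 i.castSucc).bind fun j => if h : j.val < n then some ⟨j.val, h⟩ else none, by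
    intro x y z hx hy
    dsimp only at hx hy
    rcases Option.bind_eq_some_iff.mp hx with ⟨a, ha, ha'⟩
    rcases Option.bind_eq_some_iff.mp hy with ⟨b, hb, hb'⟩
    have haz : a = z.castSucc := by
      by_cases h : a.val < n
      · rw [dif_pos h] at ha'
        have := Option.some_inj.mp ha'
        apply Fin.ext
        rw [← this]
        simp
      · rw [dif_neg h] at ha'
        exact absurd ha' (by simp)
    have hbz : b = z.castSucc := by
      by_cases h : b.val < n
      · rw [dif_pos h] at hb'
        have := Option.some_inj.mp hb'
        apply Fin.ext
        rw [← this]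
        simp
      · rw [dif_neg h] at hb'
        exact absurd hb' (by simp)
    subst haz
    rw [hbz] at hb
    exact Fin.castSucc_injective n (γ.2 _ _ _ ha hb)⟩

/-- The `0`-embedding `ψ : Γ(n) → Γ(n+1)` (extension by zero). -/
def extend0 {n : ℕ} (γ : PartialBij (Fin n)) : PartialBij (Fin (n + 1)) :=
  ⟨fun i => if h : i.val < n then (γ.1 ⟨i.val, h⟩).map Fin.castSucc else none, by
    intro x y z hx hy
    dsimp only at hx hy
    by_cases h1 : x.val < n
    · by_cases h2 : y.val < n
      · rw [dif_pos h1] at hx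
        rw [dif_pos h2] at hy
        rcases Option.map_eq_some_iff.mp hx with ⟨a, ha, ha'⟩
        rcases Option.map_eq_some_iff.mp hy with ⟨b, hb, hb'⟩
        have hab : a = b := Fin.castSucc_injective n (ha'.trans hb'.symm)
        subst hab
        have := γ.2 _ _ _ ha hb
        exact Fin.ext (by simpa using congrArg Fin.val this)
      · rw [dif_neg h2] at hy
        exact absurd hy (by simp)
    · rw [dif_neg h1] at hx
      exact absurd hx (by simp)⟩

/-- `θ_{n+1} : C[Γ(n+1)] → C[Γ(n)]`, the linear map striking the last
row and column of the monomial matrices. -/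
noncomputable def theta (n : ℕ) (a : MonoidAlgebra ℂ (PartialBij (Fin (n + 1)))) :
    MonoidAlgebra ℂ (PartialBij (Fin n)) :=
  MonoidAlgebra.ofCoeff (Finsupp.mapDomain corner a.coeff)

/-- The image of `Γ_m(n)` (partial bijections fixing each of the first `m` points)
inside the semigroup algebra `C[Γ(n)]`. -/
def Gset (m n : ℕ) : Set (MonoidAlgebra ℂ (PartialBij (Fin n))) :=
  {x | ∃ γ : PartialBij (Fin n), (∀ i : Fin n, i.val < m → γ.1 i = some i) ∧
    x = MonoidAlgebra.single γ 1}

end PartialBij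

/-- Concatenation of compositions (the partition `M ∪ L`). -/
def Composition.app {a b : ℕ} (c₁ : Composition a) (c₂ : Composition b) :
    Composition (a + b) :=
  ⟨c₁.blocks ++ c₂.blocks,
   fun {i} hi => (List.mem_append.mp hi).elim (fun h => c₁.blocks_pos h)
     (fun h => c₂.blocks_pos h),
   by rw [List.sum_append, c₁.blocks_sum, c₂.blocks_sum]⟩

/-- `c_n^{M}` for a partition (composition) `M = (M_1,…,M_r)`:
the sum over all sequences of `|M|` pairwise distinct indices of the
product of the disjoint cycles of lengths `M_1,…,M_r`. -/
noncomputable def cElt (n : ℕ) {N : ℕ} (c : Composition N) :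
    MonoidAlgebra ℂ (Equiv.Perm (Fin n)) :=
  ∑ w : Fin N ↪ Fin n,
    MonoidAlgebra.single ((((List.ofFn ⇑w).splitWrtComposition c).map List.formPerm).prod) 1

/-- `c_n^{M}` for a partition `M` of `n`. -/
noncomputable def cPart (n : ℕ) (p : Nat.Partition n) :
    MonoidAlgebra ℂ (Equiv.Perm (Fin n)) :=
  cElt n ⟨p.parts.toList,
    fun {i} hi => p.parts_pos (Multiset.mem_toList.mp hi),
    by rw [Multiset.sum_toList]⟩

/-- `Δ_n^{M}` in `C[Γ(n)]`. -/
noncomputable def Delta (n : ℕ) {N : ℕ} (c : Composition N) :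
    MonoidAlgebra ℂ (PartialBij (Fin n)) :=
  ∑ w : Fin N ↪ Fin n,
    MonoidAlgebra.single
      (PartialBij.ofPerm ((((List.ofFn ⇑w).splitWrtComposition c).map List.formPerm).prod)) 1
    * (List.ofFn fun a : Fin N =>
        (1 - MonoidAlgebra.single (PartialBij.eps (w a)) (1 : ℂ))).prod

/-!
Write `Δ_{n+1}^M` as the sum over injective sequences `w` of `σ_w ∏ₐ (1 - ε_{w a})`.
Since `θ(x ε_{n+1}) = θ(x)` and `(1 - ε_{n+1}) ε_{n+1} = 0`, the `ε`'s being commuting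
idempotents, `θ` kills every term whose sequence passes through `n + 1`. The remaining terms
are the images of the terms of `Δ_n^M` under the monoid homomorphism `Γ(n) → Γ(n+1)` that
extends a partial bijection by fixing `n + 1`, and `θ` undoes this extension.
-/

theorem List.map_splitWrtCompositionAux {α β : Type*} (g : α → β) :
    ∀ (l : List α) (ns : List ℕ),
      (l.map g).splitWrtCompositionAux ns = (l.splitWrtCompositionAux ns).map (List.map g)
  | _, [] => rfl
  | l, n :: ns => by
    rw [splitWrtCompositionAux_cons, splitWrtCompositionAux_cons, List.map_cons,
      ← List.map_take, ← List.map_drop, List.map_splitWrtCompositionAux g (l.drop n) ns]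

theorem List.map_splitWrtComposition {α β : Type*} {m : ℕ} (g : α → β) (l : List α)
    (c : Composition m) :
    (l.map g).splitWrtComposition c = (l.splitWrtComposition c).map (List.map g) :=
  List.map_splitWrtCompositionAux g l c.blocks

theorem List.prod_mul_eq_zero_of_mem {M₀ : Type*} [MonoidWithZero M₀] {l : List M₀} {x e : M₀}
    (hx : x ∈ l) (hxe : x * e = 0) (hl : ∀ y ∈ l, Commute y e) : l.prod * e = 0 := by
  obtain ⟨s, t, rfl⟩ := List.append_of_mem hx
  have ht : Commute t.prod e := Commute.list_prod_left t e fun y hy => hl y (by simp [hy])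
  rw [List.prod_append, List.prod_cons, mul_assoc, mul_assoc, ht.eq, ← mul_assoc x, hxe,
    zero_mul, mul_zero]

namespace Equiv.Perm

variable {α β : Type*} [DecidableEq α] [DecidableEq β] (ι : α ↪ β)

theorem viaEmbeddingHom_swap (a b : α) :
    viaEmbeddingHom ι (swap a b) = swap (ι a) (ι b) := by
  ext x
  rw [viaEmbeddingHom_apply]
  by_cases hx : x ∈ Set.range ι
  · obtain ⟨c, rfl⟩ := hx
    rw [viaEmbedding_apply, ι.swap_apply]
  · rw [viaEmbedding_apply_of_notMem _ _ _ hx,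
      swap_apply_of_ne_of_ne (fun h => hx ⟨a, h.symm⟩) (fun h => hx ⟨b, h.symm⟩)]

theorem formPerm_map_embedding : ∀ l : List α,
    (l.map ι).formPerm = viaEmbeddingHom ι l.formPerm
  | [] | [_] => by simp
  | a :: b :: l => by
    rw [List.map_cons, List.map_cons, List.formPerm_cons_cons, List.formPerm_cons_cons, map_mul,
      viaEmbeddingHom_swap, ← List.map_cons, formPerm_map_embedding (b :: l)]

theorem prod_formPerm_splitWrtComposition_map {m : ℕ} (c : Composition m) (l : List α) :
    (((l.map ι).splitWrtComposition c).map List.formPerm).prod =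
      viaEmbeddingHom ι (((l.splitWrtComposition c).map List.formPerm).prod) := by
  simp only [List.map_splitWrtComposition, List.map_map, map_list_prod]
  congr 2
  funext l'
  exact formPerm_map_embedding ι l'

end Equiv.Perm

theorem Fin.sum_embedding_eq_sum_trans_castSuccEmb {A : Type*} [AddCommMonoid A] {N n : ℕ}
    (f : (Fin N ↪ Fin (n + 1)) → A) (hf : ∀ w a, w a = Fin.last n → f w = 0) :
    ∑ w, f w = ∑ v : Fin N ↪ Fin n, f (v.trans Fin.castSuccEmb) := by
  refine (Fintype.sum_of_injective (fun v : Fin N ↪ Fin n => v.trans Fin.castSuccEmb) ?_ _ _ ?_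
    fun _ => rfl).symm
  · intro v₁ v₂ hv
    exact DFunLike.ext _ _ fun a => Fin.castSucc_injective n (DFunLike.congr_fun hv a)
  · intro w hw
    by_contra hne
    refine hw ⟨⟨fun a => (w a).castLT (Fin.val_lt_last fun h => hne (hf w a h)),
      fun a b hab => w.injective (Fin.ext (by simpa using congrArg Fin.val hab))⟩, ?_⟩
    ext a
    rfl

namespace PartialBij

open MonoidAlgebra

variable {α : Type*} {n N : ℕ}

@[ext]
theorem ext {f g : PartialBij α} (h : ∀ x, f.1 x = g.1 x) : f = g :=
  Subtype.ext (funext h)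

theorem ofPerm_apply (σ : Equiv.Perm α) (x : α) : (ofPerm σ).1 x = some (σ x) := rfl

theorem eps_apply [DecidableEq α] (k x : α) : (eps k).1 x = if x = k then none else some x := rfl

theorem eps_mul_self [DecidableEq α] (k : α) : eps k * eps k = eps k := by
  ext x
  by_cases hx : x = k <;> simp [mul_def, eps_apply, hx]

theorem eps_mul_comm [DecidableEq α] (k l : α) : eps k * eps l = eps l * eps k := by
  ext x
  by_cases hk : x = k <;> by_cases hl : x = l <;> simp_all [mul_def, eps_apply]

theorem corner_mul_eps_last (γ : PartialBij (Fin (n + 1))) :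
    corner (γ * eps (Fin.last n)) = corner γ := by
  ext i
  simp [corner, mul_def, eps_apply]

def extendLast (f : PartialBij (Fin n)) : PartialBij (Fin (n + 1)) :=
  ⟨Fin.lastCases (some (Fin.last n)) fun i => (f.1 i).map Fin.castSucc, by
    intro x y z hx hy
    induction x using Fin.lastCases <;> induction y using Fin.lastCases <;>
      simp only [Fin.lastCases_last, Fin.lastCases_castSucc, Option.some_inj,
        Option.map_eq_some_iff] at hx hy
    · rfl
    · obtain ⟨a, -, rfl⟩ := hy
      exact absurd hx (Fin.castSucc_lt_last a).ne'
    · obtain ⟨a, -, rfl⟩ := hx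
      exact absurd hy (Fin.castSucc_lt_last a).ne'
    · obtain ⟨a, ha, rfl⟩ := hx
      obtain ⟨b, hb, hab⟩ := hy
      rw [Fin.castSucc_inj] at hab
      subst hab
      rw [f.2 _ _ _ ha hb]⟩

@[simp]
theorem extendLast_last (f : PartialBij (Fin n)) :
    (extendLast f).1 (Fin.last n) = some (Fin.last n) :=
  Fin.lastCases_last (motive := fun _ => Option (Fin (n + 1)))

@[simp]
theorem extendLast_castSucc (f : PartialBij (Fin n)) (i : Fin n) :
    (extendLast f).1 i.castSucc = (f.1 i).map Fin.castSucc :=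
  Fin.lastCases_castSucc (motive := fun _ => Option (Fin (n + 1))) i

theorem extendLast_one : extendLast (1 : PartialBij (Fin n)) = 1 := by
  ext i
  induction i using Fin.lastCases <;> simp [one_def]

theorem extendLast_mul (g f : PartialBij (Fin n)) :
    extendLast (g * f) = extendLast g * extendLast f := by
  ext i
  induction i using Fin.lastCases with
  | last => simp [mul_def]
  | cast i => cases h : f.1 i <;> simp [mul_def, h]

def extendLastHom (n : ℕ) : PartialBij (Fin n) →* PartialBij (Fin (n + 1)) where
  toFun := extendLast
  map_one' := extendLast_one
  map_mul' := extendLast_mul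

theorem corner_extendLast (f : PartialBij (Fin n)) : corner (extendLast f) = f := by
  ext i
  cases h : f.1 i <;> simp [corner, h]

theorem extendLast_eps (k : Fin n) : extendLast (eps k) = eps k.castSucc := by
  ext i
  induction i using Fin.lastCases with
  | last => simp [eps_apply, (Fin.castSucc_lt_last k).ne']
  | cast i => by_cases h : i = k <;> simp [eps_apply, h]

theorem extendLast_ofPerm (σ : Equiv.Perm (Fin n)) :
    extendLast (ofPerm σ) = ofPerm (σ.viaEmbeddingHom Fin.castSuccEmb) := by
  ext i : 1
  rw [ofPerm_apply, Equiv.Perm.viaEmbeddingHom_apply]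
  induction i using Fin.lastCases with
  | last =>
    have : Fin.last n ∉ Set.range Fin.castSuccEmb := by simp
    rw [extendLast_last, Equiv.Perm.viaEmbedding_apply_of_notMem _ _ _ this]
  | cast i =>
    rw [extendLast_castSucc, ofPerm_apply, ← Fin.coe_castSuccEmb, Equiv.Perm.viaEmbedding_apply]
    rfl

theorem commute_single_eps {R : Type*} [Semiring R] [DecidableEq α] (k l : α) :
    Commute (single (eps k) (1 : R)) (single (eps l) 1) := by
  simp only [Commute, SemiconjBy, single_mul_single, mul_one, eps_mul_comm]

theorem one_sub_single_eps_mul_self {R : Type*} [Ring R] [DecidableEq α] (k : α) :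
    (1 - single (eps k) (1 : R)) * single (eps k) 1 = 0 := by
  rw [sub_mul, one_mul, single_mul_single, mul_one, eps_mul_self, sub_self]

theorem theta_eq_mapDomain (x : MonoidAlgebra ℂ (PartialBij (Fin (n + 1)))) :
    theta n x = mapDomain corner x := rfl

theorem theta_sum {ι : Type*} (s : Finset ι)
    (f : ι → MonoidAlgebra ℂ (PartialBij (Fin (n + 1)))) :
    theta n (∑ i ∈ s, f i) = ∑ i ∈ s, theta n (f i) :=
  map_sum (mapDomainLinearMap ℂ ℂ corner) f s

theorem theta_mul_single_eps_last (x : MonoidAlgebra ℂ (PartialBij (Fin (n + 1)))) :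
    theta n (x * single (eps (Fin.last n)) 1) = theta n x := by
  induction x using MonoidAlgebra.induction_linear with
  | zero => rw [zero_mul]
  | add x y hx hy =>
    simp only [add_mul, theta_eq_mapDomain, mapDomain_add] at hx hy ⊢
    rw [hx, hy]
  | single γ c => simp [theta_eq_mapDomain, single_mul_single, corner_mul_eps_last]

theorem theta_mapDomain_extendLast (x : MonoidAlgebra ℂ (PartialBij (Fin n))) :
    theta n (mapDomain extendLast x) = x := by
  have hid : corner ∘ extendLast = (id : PartialBij (Fin n) → PartialBij (Fin n)) :=
    funext corner_extendLast
  ext γ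
  simp [theta_eq_mapDomain, ← Finsupp.mapDomain_comp, hid]

noncomputable def deltaTerm [DecidableEq α] (M : Composition N) (w : Fin N → α) :
    MonoidAlgebra ℂ (PartialBij α) :=
  single (ofPerm ((((List.ofFn w).splitWrtComposition M).map List.formPerm).prod)) 1 *
    (List.ofFn fun a : Fin N => (1 - single (eps (w a)) (1 : ℂ))).prod

theorem Delta_eq_sum_deltaTerm (n : ℕ) (M : Composition N) :
    Delta n M = ∑ w : Fin N ↪ Fin n, deltaTerm M w := rfl

theorem theta_deltaTerm_of_eq_last (M : Composition N) (w : Fin N → Fin (n + 1)) (a : Fin N)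
    (ha : w a = Fin.last n) : theta n (deltaTerm M w) = 0 := by
  set e : MonoidAlgebra ℂ (PartialBij (Fin (n + 1))) := single (eps (Fin.last n)) 1
  have hlast : (1 - single (eps (w a)) 1) * e = 0 := by
    rw [ha, one_sub_single_eps_mul_self]
  have hcomm : ∀ y ∈ List.ofFn fun b => 1 - single (eps (w b)) (1 : ℂ), Commute y e := by
    simp only [List.mem_ofFn]
    rintro _ ⟨b, rfl⟩
    exact (Commute.one_left _).sub_left (commute_single_eps _ _)
  have hprod : (List.ofFn fun b => 1 - single (eps (w b)) (1 : ℂ)).prod * e = 0 :=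
    List.prod_mul_eq_zero_of_mem (List.mem_ofFn.mpr ⟨a, rfl⟩) hlast hcomm
  rw [deltaTerm, ← theta_mul_single_eps_last, mul_assoc, hprod, mul_zero, theta_eq_mapDomain,
    mapDomain_zero]

theorem mapDomain_extendLast_deltaTerm (M : Composition N) (w : Fin N → Fin n) :
    mapDomain extendLast (deltaTerm M w) = deltaTerm M (Fin.castSucc ∘ w) := by
  change mapDomainRingHom ℂ (extendLastHom n) _ = _
  rw [deltaTerm, deltaTerm, map_mul, map_list_prod, List.map_ofFn]
  congr 1
  · change mapDomain extendLast (single _ 1) = _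
    rw [mapDomain_single, extendLast_ofPerm, ← List.map_ofFn, ← Fin.coe_castSuccEmb,
      Equiv.Perm.prod_formPerm_splitWrtComposition_map]
  · congr 2
    funext a
    rw [Function.comp_apply, map_sub, map_one]
    change _ - mapDomain extendLast (single _ 1) = _
    rw [mapDomain_single, extendLast_eps]
    rfl

end PartialBij

theorem theta_Delta_general (n : ℕ) {N : ℕ} (M : Composition N) :
    PartialBij.theta n (Delta (n + 1) M) = Delta n M := by
  rw [PartialBij.Delta_eq_sum_deltaTerm, PartialBij.Delta_eq_sum_deltaTerm, PartialBij.theta_sum,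
    Fin.sum_embedding_eq_sum_trans_castSuccEmb _ fun w a ha =>
      PartialBij.theta_deltaTerm_of_eq_last M w a ha]
  refine Finset.sum_congr rfl fun v _ => ?_
  rw [Function.Embedding.coe_trans, Fin.coe_castSuccEmb,
    ← PartialBij.mapDomain_extendLast_deltaTerm, PartialBij.theta_mapDomain_extendLast]

/-- `θ_{n+1}(Δ_{n+1}^{M}) = Δ_n^{M}` (with the convention that `Δ_n^{M} = 0`
when `|M| > n`, which holds automatically since there are no sequences of
`|M|` pairwise distinct indices in `{1,…,n}`). -/
theorem theta_Delta (n : ℕ) {N : ℕ} (M : Composition N) (h : N ≤ n + 1) :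
    PartialBij.theta n (Delta (n + 1) M) = Delta n M :=
  theta_Delta_general n M
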